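/- Let N ≥ 1 and 0 ≤ u, v < 2^{2^{N−1}}, and write B_{uv}^{(N)}(z) = ∑_{k=0}^{2^N−1} b_k z^k. If v is even, then the sum of the odd-index coefficients vanishes: b_1 + b_3 + ⋯ + b_{2^N−1} = 0. If v is odd, then the sum of the even-index coefficients vanishes: b_0 + b_2 + ⋯ + b_{2^N−2} = 0. -/

import Mathlib

/-- `bitd n i` is the `i`-th binary digit of `n` (0 or 1). -/
def bitd (n i : ℕ) : ℕ := if n.testBit i then 1 else 0

/-- The polynomial `s_k^{(N)}(z) = ∏_{i=0}^{N-2} (1 + (-1)^{k_i} z^{2^{i+1}})`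
(the empty product, for `N = 1`, being `1`). -/
noncomputable def sPoly (N k : ℕ) : Polynomial ℤ :=
  ∏ i ∈ Finset.range (N - 1),
    (1 + Polynomial.C ((-1 : ℤ) ^ bitd k i) * Polynomial.X ^ (2 ^ (i + 1)))

/-- The Bell polynomial `B_{uv}^{(N)}(z) = ∑_{k<2^{N-1}} (-1)^{u_k} z^{v_k} s_k^{(N)}(z)`. -/
noncomputable def BPoly (N u v : ℕ) : Polynomial ℤ :=
  ∑ k ∈ Finset.range (2 ^ (N - 1)),
    Polynomial.C ((-1 : ℤ) ^ bitd u k) * Polynomial.X ^ bitd v k * sPoly N k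

lemma sum_range_two_mul (f : ℕ → ℤ) (n : ℕ) :
    ∑ i ∈ Finset.range (2 * n), f i =
      (∑ j ∈ Finset.range n, f (2 * j)) + ∑ j ∈ Finset.range n, f (2 * j + 1) := by
  induction n with
  | zero => simp
  | succ n ih =>
    rw [show 2 * (n + 1) = 2 * n + 1 + 1 by ring, Finset.sum_range_succ,
      Finset.sum_range_succ, ih, Finset.sum_range_succ, Finset.sum_range_succ]
    ring

lemma pow_sum_lt (n : ℕ) : 1 + ∑ i ∈ Finset.range n, 2 ^ (i + 1) < 2 ^ (n + 1) := by
  induction n with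
  | zero => norm_num
  | succ n ih =>
    rw [Finset.sum_range_succ]
    have : 2 ^ (n + 1 + 1) = 2 ^ (n + 1) + 2 ^ (n + 1) := by ring
    omega

lemma natDegree_BPoly_lt (N u v : ℕ) (hN : 1 ≤ N) :
    (BPoly N u v).natDegree < 2 ^ N := by
  apply lt_of_le_of_lt (Polynomial.natDegree_sum_le_of_forall_le _ _ ?_)
    (show 2 ^ N - 1 < 2 ^ N by have := Nat.one_le_two_pow (n := N); omega)
  intro k _
  have hs : (sPoly N k).natDegree ≤ ∑ i ∈ Finset.range (N - 1), 2 ^ (i + 1) := by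
    refine le_trans (Polynomial.natDegree_prod_le _ _) (Finset.sum_le_sum ?_)
    intro i _
    refine le_trans (Polynomial.natDegree_add_le _ _) (max_le (by simp) ?_)
    exact le_trans (Polynomial.natDegree_C_mul_le _ _) (by simp)
  have hb : bitd v k ≤ 1 := by unfold bitd; split <;> omega
  calc (Polynomial.C ((-1 : ℤ) ^ bitd u k) * Polynomial.X ^ bitd v k * sPoly N k).natDegree
      ≤ (Polynomial.C ((-1 : ℤ) ^ bitd u k) * Polynomial.X ^ bitd v k).natDegree
        + (sPoly N k).natDegree := Polynomial.natDegree_mul_le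
    _ ≤ bitd v k + (sPoly N k).natDegree := by
        gcongr
        exact le_trans (Polynomial.natDegree_C_mul_le _ _) (by simp)
    _ ≤ 1 + ∑ i ∈ Finset.range (N - 1), 2 ^ (i + 1) := by omega
    _ ≤ 2 ^ N - 1 := by
        have h := pow_sum_lt (N - 1)
        rw [show N - 1 + 1 = N by omega] at h
        omega

lemma eval_sPoly (N k : ℕ) (x : ℤ) (hx : x = 1 ∨ x = -1) (hk : k < 2 ^ (N - 1)) :
    (sPoly N k).eval x = if k = 0 then 2 ^ (N - 1) else 0 := by
  have hx2 : ∀ i : ℕ, x ^ (2 ^ (i + 1)) = 1 := by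
    intro i
    rcases hx with rfl | rfl
    · simp
    · rw [show (2:ℕ) ^ (i+1) = 2 * 2 ^ i by ring, pow_mul]; norm_num
  unfold sPoly
  rw [Polynomial.eval_prod]
  simp only [Polynomial.eval_add, Polynomial.eval_one, Polynomial.eval_mul,
    Polynomial.eval_C, Polynomial.eval_pow, Polynomial.eval_X, hx2, mul_one]
  split
  · subst_vars
    simp [bitd, Nat.zero_testBit, Finset.prod_const]
  · rename_i hk0
    have : ∃ i ∈ Finset.range (N - 1), k.testBit i := by
      by_contra h
      push_neg at h
      apply hk0
      apply Nat.eq_of_testBit_eq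
      intro i
      simp only [Nat.zero_testBit]
      by_cases hi : i < N - 1
      · exact Bool.eq_false_iff.mpr (fun hb => (h i (Finset.mem_range.mpr hi) hb).elim) ▸
          (by simpa using h i (Finset.mem_range.mpr hi))
      · exact Nat.testBit_lt_two_pow (lt_of_lt_of_le hk (Nat.pow_le_pow_right (by norm_num) (by omega)))
    obtain ⟨i, hi, hb⟩ := this
    apply Finset.prod_eq_zero hi
    simp [bitd, hb]

lemma eval_BPoly (N u v : ℕ) (hN : 1 ≤ N) (x : ℤ) (hx : x = 1 ∨ x = -1) :
    (BPoly N u v).eval x = (-1 : ℤ) ^ bitd u 0 * x ^ bitd v 0 * 2 ^ (N - 1) := by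
  unfold BPoly
  rw [Polynomial.eval_finset_sum]
  rw [Finset.sum_eq_single 0]
  · simp [eval_sPoly N 0 x hx (Nat.pow_pos (by norm_num))]
  · intro k hk hk0
    simp only [Polynomial.eval_mul, Polynomial.eval_C, Polynomial.eval_pow, Polynomial.eval_X]
    rw [eval_sPoly N k x hx (Finset.mem_range.mp hk)]
    simp [hk0]
  · intro h
    exact absurd (Finset.mem_range.mpr (Nat.pow_pos (by norm_num))) h

/-- For `N ≥ 1`, `u, v < 2^{2^{N-1}}`, write `b_k` for the coefficients
of `B_{uv}^{(N)}`. If `v` is even then `b_1 + b_3 + ⋯ + b_{2^N-1} = 0`; if `v` is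
odd then `b_0 + b_2 + ⋯ + b_{2^N-2} = 0`. -/
theorem stmt16 (N u v : ℕ) (hN : 1 ≤ N)
    (hu : u < 2 ^ 2 ^ (N - 1)) (hv : v < 2 ^ 2 ^ (N - 1)) :
    (Even v → ∑ j ∈ Finset.range (2 ^ (N - 1)), (BPoly N u v).coeff (2 * j + 1) = 0) ∧
    (Odd v → ∑ j ∈ Finset.range (2 ^ (N - 1)), (BPoly N u v).coeff (2 * j) = 0) := by
  set P := BPoly N u v with hP
  have hdeg : P.natDegree < 2 ^ N := natDegree_BPoly_lt N u v hN
  have h2N : 2 ^ N = 2 * 2 ^ (N - 1) := by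
    rw [← pow_succ']
    congr 1
    omega
  have he1 : P.eval 1 = (∑ j ∈ Finset.range (2 ^ (N - 1)), P.coeff (2 * j))
      + ∑ j ∈ Finset.range (2 ^ (N - 1)), P.coeff (2 * j + 1) := by
    rw [Polynomial.eval_eq_sum_range' (lt_of_lt_of_le hdeg (le_refl _)) , h2N,
      sum_range_two_mul]
    simp
  have hem1 : P.eval (-1) = (∑ j ∈ Finset.range (2 ^ (N - 1)), P.coeff (2 * j))
      - ∑ j ∈ Finset.range (2 ^ (N - 1)), P.coeff (2 * j + 1) := by
    rw [Polynomial.eval_eq_sum_range' (lt_of_lt_of_le hdeg (le_refl _)), h2N,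
      sum_range_two_mul, sub_eq_add_neg, ← Finset.sum_neg_distrib]
    congr 1
    · apply Finset.sum_congr rfl; intro j _
      rw [pow_mul]; norm_num
    · apply Finset.sum_congr rfl; intro j _
      rw [pow_succ, pow_mul]; norm_num
  constructor
  · intro hev
    have h2 : v % 2 = 0 := Nat.even_iff.mp hev
    have hb : bitd v 0 = 0 := by simp [bitd, Nat.testBit_zero, h2]
    have e1 := eval_BPoly N u v hN 1 (Or.inl rfl)
    have e2 := eval_BPoly N u v hN (-1) (Or.inr rfl)
    rw [← hP, hb] at e1 e2
    simp only [pow_zero, mul_one, one_mul, one_pow] at e1 e2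
    have heq : P.eval 1 = P.eval (-1) := by rw [e1, e2]
    rw [he1, hem1] at heq
    linarith
  · intro hodd
    have h2 : v % 2 = 1 := Nat.odd_iff.mp hodd
    have hb : bitd v 0 = 1 := by simp [bitd, Nat.testBit_zero, h2]
    have e1 := eval_BPoly N u v hN 1 (Or.inl rfl)
    have e2 := eval_BPoly N u v hN (-1) (Or.inr rfl)
    rw [← hP, hb] at e1 e2
    simp only [pow_one, mul_one, one_pow] at e1 e2
    have : P.eval 1 = - P.eval (-1) := by rw [e1, e2]; ring
    rw [he1, hem1] at this
    linarith
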